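/- Let A be a stably dissipative real n×n matrix and q ∈ ℝⁿ₊. If a vertex i belongs to the R-closure of the graph G_A, then every x ∈ ℝⁿ₊ with A(x − q) = 0 satisfies x_i = q_i; that is, every vertex blackened by the simplified reduction rule (R) is a restriction to the equilibria of X_{A,q}. -/

import Mathlib

open Matrix

/-- A real `n × n` matrix `A` is dissipative if there is a positive diagonal
matrix `D = diag d` such that `xᵀ A D x ≤ 0` for all `x`. -/
def IsDissipative {n : ℕ} (A : Matrix (Fin n) (Fin n) ℝ) : Prop :=
  ∃ d : Fin n → ℝ, (∀ i, 0 < d i) ∧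
    ∀ x : Fin n → ℝ, ∑ i, ∑ j, x i * A i j * d j * x j ≤ 0

/-- `A` is stably dissipative if every sufficiently small perturbation
(preserving the zero pattern) is dissipative. -/
def IsStablyDissipative {n : ℕ} (A : Matrix (Fin n) (Fin n) ℝ) : Prop :=
  ∃ ε > (0 : ℝ), ∀ B : Matrix (Fin n) (Fin n) ℝ,
    (∀ i j, B i j = 0 ↔ A i j = 0) → (∀ i j, |A i j - B i j| < ε) →
    IsDissipative B

/-- The graph `G_A` of a matrix `A`: vertices `1, …, n`, with an edge between
`i ≠ j` iff `a_ij ≠ 0` or `a_ji ≠ 0`. -/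
def graphOf {n : ℕ} (A : Matrix (Fin n) (Fin n) ℝ) : SimpleGraph (Fin n) where
  Adj i j := i ≠ j ∧ (A i j ≠ 0 ∨ A j i ≠ 0)
  symm := ⟨fun _ _ h => ⟨h.1.symm, h.2.symm⟩⟩
  loopless := ⟨fun _ h => h.1 rfl⟩

/-- The R-closure of a black-and-white graph: the smallest set of vertices
containing all black vertices and closed under the reduction rule (R): if all
neighbours of some vertex `j` belong to `S` except exactly one vertex `k`,
then `k ∈ S`. -/
def RClosure {V : Type*} (G : SimpleGraph V) (black : Set V) : Set V :=
  ⋂₀ {S : Set V | black ⊆ S ∧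
    ∀ j k, G.Adj j k → (∀ l, G.Adj j l → l = k ∨ l ∈ S) → k ∈ S}

/-!
Put `y = x - q`, so that `A y = 0`. Replacing the entry `a_jk` by `(1 + s) a_jk` keeps the zero
pattern, so for small `s` the perturbed matrix `B` is dissipative, say with weights `e`; since
`B y = s a_jk y_k e_j`, testing dissipativity of `B` at `y / e` gives `s a_jk y_j y_k ≤ 0` for all
small `s` of both signs, hence `a_jk y_j y_k = 0`, in particular `a_kk y_k = 0`. Dissipativity of
`A` itself, with weights `d`, makes `t ↦ Q(z + t w)` a nonpositive quadratic vanishing at `0` when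
`z = y / d`, so its linear term vanishes: `Aᵀ (y / d) = 0`. Hence the zero set of `y` contains the
black vertices and is closed under (R): if all neighbours of `j` but `k` lie in it, row `j` of
`A y = 0` gives `a_jk y_k = 0` and column `j` of `Aᵀ (y / d) = 0` gives `a_kj y_k = 0`.
-/

open Filter Topology

lemma eq_zero_of_eventually_mul_nonpos {g : ℝ → ℝ} (hg : ContinuousAt g 0)
    (h : ∀ᶠ s in 𝓝 0, s * g s ≤ 0) : g 0 = 0 := by
  apply le_antisymm
  · refine le_of_tendsto (hg.tendsto.mono_left nhdsWithin_le_nhds : Tendsto g (𝓝[>] 0) _) ?_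
    filter_upwards [nhdsWithin_le_nhds h, self_mem_nhdsWithin] with s hs (hs0 : 0 < s)
    exact nonpos_of_mul_nonpos_right hs hs0
  · refine ge_of_tendsto (hg.tendsto.mono_left nhdsWithin_le_nhds : Tendsto g (𝓝[<] 0) _) ?_
    filter_upwards [nhdsWithin_le_nhds h, self_mem_nhdsWithin] with s hs (hs0 : s < 0)
    exact nonneg_of_mul_nonpos_right hs hs0

section Dissipative

variable {n : ℕ} {A : Matrix (Fin n) (Fin n) ℝ}

lemma isDissipative_iff :
    IsDissipative A ↔ ∃ d : Fin n → ℝ, (∀ i, 0 < d i) ∧ ∀ x, x ⬝ᵥ A *ᵥ (d * x) ≤ 0 := by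
  have hform : ∀ d x : Fin n → ℝ,
      ∑ i, ∑ j, x i * A i j * d j * x j = x ⬝ᵥ A *ᵥ (d * x) := by
    intro d x
    simp only [dotProduct, mulVec, Pi.mul_apply, Finset.mul_sum]
    exact Finset.sum_congr rfl fun i _ => Finset.sum_congr rfl fun j _ => by ring
  simp only [IsDissipative, hform]

lemma IsDissipative.mul_nonpos_of_mulVec_eq_single (hA : IsDissipative A)
    {y : Fin n → ℝ} {j : Fin n} {c : ℝ} (hy : A *ᵥ y = Pi.single j c) : y j * c ≤ 0 := by
  obtain ⟨d, hd, hQ⟩ := isDissipative_iff.mp hA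
  have hdy : d * (y / d) = y := funext fun i => mul_div_cancel₀ (y i) (hd i).ne'
  have h := hQ (y / d)
  rw [hdy, hy, dotProduct_single, Pi.div_apply] at h
  calc y j * c = d j * (y j / d j * c) := by field_simp [(hd j).ne']
    _ ≤ 0 := mul_nonpos_of_nonneg_of_nonpos (hd j).le h

lemma vecMul_eq_zero_of_mulVec_eq_zero {d z : Fin n → ℝ} (hd : ∀ i, d i ≠ 0)
    (hQ : ∀ x, x ⬝ᵥ A *ᵥ (d * x) ≤ 0) (hz : A *ᵥ (d * z) = 0) : z ᵥ* A = 0 := by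
  ext j
  set w : Fin n → ℝ := Pi.single j 1
  have hline : ∀ t : ℝ, t * (z ⬝ᵥ A *ᵥ (d * w) + t * (w ⬝ᵥ A *ᵥ (d * w))) ≤ 0 := by
    intro t
    have h := hQ (z + t • w)
    simp only [mul_add, mul_smul_comm, mulVec_add, mulVec_smul, hz, zero_add, add_dotProduct,
      smul_dotProduct, dotProduct_smul, smul_eq_mul] at h
    linarith
  have h0 := eq_zero_of_eventually_mul_nonpos (by fun_prop) (Eventually.of_forall hline)
  have hdw : d * w = Pi.single j (d j) := by
    ext i
    rcases eq_or_ne i j with rfl | hij <;> simp [w, *]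
  simp only [zero_mul, add_zero, hdw, dotProduct_mulVec, dotProduct_single] at h0
  exact (mul_eq_zero.mp h0).resolve_right (hd j)

lemma IsStablyDissipative.isDissipative (hA : IsStablyDissipative A) : IsDissipative A := by
  obtain ⟨ε, hε, h⟩ := hA
  exact h A (fun _ _ => Iff.rfl) (fun _ _ => by simpa using hε)

lemma IsStablyDissipative.eventually_isDissipative_add_single (hA : IsStablyDissipative A)
    (j k : Fin n) : ∀ᶠ s in 𝓝 (0 : ℝ), IsDissipative (A + single j k (s * A j k)) := by
  obtain ⟨ε, hε, h⟩ := hA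
  have hsmall : ∀ᶠ s in 𝓝 (0 : ℝ), |s * A j k| < ε := by
    have : Tendsto (fun s : ℝ => |s * A j k|) (𝓝 0) (𝓝 0) := by
      simpa using (continuous_id.mul continuous_const).abs.tendsto (0 : ℝ)
    exact this.eventually (gt_mem_nhds hε)
  filter_upwards [hsmall, eventually_ne_nhds (show (0 : ℝ) ≠ -1 by norm_num)] with s hs hs1
  have hs1' : 1 + s ≠ 0 := fun h => hs1 (by linarith)
  refine h _ (fun i l => ?_) (fun i l => ?_) <;> by_cases hil : j = i ∧ k = l
  · obtain ⟨rfl, rfl⟩ := hil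
    simp [← one_add_mul, hs1']
  · simp [single_apply_of_ne (h := hil)]
  · obtain ⟨rfl, rfl⟩ := hil
    simpa using hs
  · simpa [single_apply_of_ne (h := hil)] using hε

lemma IsStablyDissipative.mul_mul_eq_zero_of_mulVec_eq_zero (hA : IsStablyDissipative A)
    {y : Fin n → ℝ} (hy : A *ᵥ y = 0) (j k : Fin n) : A j k * y j * y k = 0 := by
  refine eq_zero_of_eventually_mul_nonpos (g := fun _ => A j k * y j * y k) continuousAt_const ?_
  filter_upwards [hA.eventually_isDissipative_add_single j k] with s hs
  have hBy : (A + single j k (s * A j k)) *ᵥ y = Pi.single j (s * A j k * y k) := by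
    rw [add_mulVec, hy, zero_add, single_mulVec]
    rfl
  calc s * (A j k * y j * y k) = y j * (s * A j k * y k) := by ring
    _ ≤ 0 := hs.mul_nonpos_of_mulVec_eq_single hBy

end Dissipative

lemma rClosure_subset {V : Type*} {G : SimpleGraph V} {black S : Set V} (hblack : black ⊆ S)
    (hR : ∀ j k, G.Adj j k → (∀ l, G.Adj j l → l = k ∨ l ∈ S) → k ∈ S) :
    RClosure G black ⊆ S :=
  Set.sInter_subset_of_mem ⟨hblack, hR⟩

lemma rClosure_graphOf_subset {n : ℕ} {A : Matrix (Fin n) (Fin n) ℝ} {y z : Fin n → ℝ}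
    (hy : A *ᵥ y = 0) (hz : z ᵥ* A = 0) (hyz : ∀ k, z k = 0 ↔ y k = 0)
    (hdiag : ∀ k, A k k * y k = 0) :
    RClosure (graphOf A) {k | A k k < 0} ⊆ {k | y k = 0} := by
  refine rClosure_subset (fun k hk => (mul_eq_zero.mp (hdiag k)).resolve_left hk.ne) ?_
  intro j k hjk hS
  have hother : ∀ l ≠ k, l = j ∨ y l = 0 ∨ (A j l = 0 ∧ A l j = 0) := by
    intro l hlk
    by_cases hjl : (graphOf A).Adj j l
    · exact Or.inr (Or.inl ((hS l hjl).resolve_left hlk))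
    · simp only [graphOf, ne_eq, not_and, not_or, not_not] at hjl
      tauto
  have hrow : A j k * y k = 0 := by
    have h := congrFun hy j
    rwa [mulVec, dotProduct, Finset.sum_eq_single k (fun l _ hlk => ?_) (by simp)] at h
    rcases hother l hlk with rfl | hl | ⟨hl, -⟩ <;> simp [*]
  have hcol : z k * A k j = 0 := by
    have h := congrFun hz j
    rwa [vecMul, dotProduct, Finset.sum_eq_single k (fun l _ hlk => ?_) (by simp)] at h
    rcases hother l hlk with rfl | hl | ⟨-, hl⟩
    · rcases mul_eq_zero.mp (hdiag l) with h | h <;> simp [h, hyz]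
    · simp [(hyz l).mpr hl]
    · simp [hl]
  rcases hjk.2 with h | h
  · exact (mul_eq_zero.mp hrow).resolve_left h
  · exact (hyz k).mp ((mul_eq_zero.mp hcol).resolve_right h)

lemma IsStablyDissipative.rClosure_subset_of_mulVec_eq_zero {n : ℕ}
    {A : Matrix (Fin n) (Fin n) ℝ} (hA : IsStablyDissipative A) {y : Fin n → ℝ}
    (hy : A *ᵥ y = 0) : RClosure (graphOf A) {k | A k k < 0} ⊆ {k | y k = 0} := by
  obtain ⟨d, hd, hQ⟩ := isDissipative_iff.mp hA.isDissipative
  have hdy : d * (y / d) = y := funext fun i => mul_div_cancel₀ (y i) (hd i).ne'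
  refine rClosure_graphOf_subset hy
    (vecMul_eq_zero_of_mulVec_eq_zero (fun i => (hd i).ne') hQ (hdy ▸ hy))
    (fun k => by simp [(hd k).ne']) (fun k => ?_)
  rcases mul_eq_zero.mp (hA.mul_mul_eq_zero_of_mulVec_eq_zero hy k k) with h | h
  · exact h
  · simp [h]

theorem stmt8_general {n : ℕ} (A : Matrix (Fin n) (Fin n) ℝ)
    (hA : IsStablyDissipative A) (q : Fin n → ℝ)
    (i : Fin n) (hi : i ∈ RClosure (graphOf A) {k | A k k < 0}) :
    ∀ x : Fin n → ℝ, (∀ k, 0 < x k) → A.mulVec (x - q) = 0 → x i = q i := by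
  intro x _ hx
  exact sub_eq_zero.mp (hA.rClosure_subset_of_mulVec_eq_zero hx hi)

/-- For a stably dissipative matrix `A` and positive `q`, every vertex `i` in
the R-closure of `G_A` is a restriction to the equilibria of `X_{A,q}`: every
positive `x` with `A(x - q) = 0` satisfies `x i = q i`. -/
theorem stmt8 {n : ℕ} (A : Matrix (Fin n) (Fin n) ℝ)
    (hA : IsStablyDissipative A) (q : Fin n → ℝ) (hq : ∀ k, 0 < q k)
    (i : Fin n) (hi : i ∈ RClosure (graphOf A) {k | A k k < 0}) :
    ∀ x : Fin n → ℝ, (∀ k, 0 < x k) → A.mulVec (x - q) = 0 → x i = q i :=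
  stmt8_general A hA q i hi
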